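/- Let ε ∈ ℝ, Δτ ≠ 0, and assume the linear instability condition: ε < 0 or ε > 2/(π(Δτ)²). Let t₀, t₁, …, t_k ∈ ℝ with cos(πt_j) ≠ 0 for all j. Then there exists a nonzero vector a = (a₁, a₂) ∈ ℝ² lying in the stable cone at t₀ such that for every j ∈ {1, …, k}, the vector b⁽ʲ⁾ = J̃(t_{j−1})·J̃(t_{j−2})···J̃(t₀)·a lies in the stable cone at t_j; i.e., along any finite orbit segment there exists a direction whose forward Jacobian products remain in the stable cones. -/
import Mathlib

/-- `α(t) = 1 − πε(Δτ)²/cos²(πt)`. -/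
noncomputable def alphaT (ε Δτ t : ℝ) : ℝ :=
  1 - Real.pi * ε * Δτ ^ 2 / Real.cos (Real.pi * t) ^ 2

/-- The stable cone at `t`: vectors `(a₁,a₂)` with `a₂ ≠ 0` and `a₁/a₂ < α(t)`
when `ε > 2/(π(Δτ)²)`, resp. `a₁/a₂ > α(t)` when `ε < 0`. -/
noncomputable def stableCone (ε Δτ t : ℝ) : Set (ℝ × ℝ) :=
  {a : ℝ × ℝ | a.2 ≠ 0 ∧
    (ε > 2 / (Real.pi * Δτ ^ 2) → a.1 / a.2 < alphaT ε Δτ t) ∧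
    (ε < 0 → a.1 / a.2 > alphaT ε Δτ t)}

/-- The action of the Jacobian `J̃(t)` (rows `(0,1)` and `(−1, 2α(t))`) on a
vector of `ℝ²`. -/
noncomputable def Japply (ε Δτ t : ℝ) (a : ℝ × ℝ) : ℝ × ℝ :=
  (a.2, -a.1 + 2 * alphaT ε Δτ t * a.2)

/-- The iterated Jacobian products along a sequence of base points:
`jacIter 0 = a`, `jacIter (j+1) = J̃(t j) · jacIter j`, so that
`jacIter j = J̃(t_{j−1})···J̃(t₀)·a`. -/
noncomputable def jacIter (ε Δτ : ℝ) (t : ℕ → ℝ) (a : ℝ × ℝ) : ℕ → ℝ × ℝ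
  | 0 => a
  | j + 1 => Japply ε Δτ (t j) (jacIter ε Δτ t a j)

private lemma alpha_lt_neg_one (ε Δτ t : ℝ) (hΔτ : Δτ ≠ 0)
    (hε : ε > 2 / (Real.pi * Δτ ^ 2)) (ht : Real.cos (Real.pi * t) ≠ 0) :
    alphaT ε Δτ t < -1 := by
  have hπ := Real.pi_pos
  have hden : 0 < Real.pi * Δτ ^ 2 := by positivity
  have h2 : 2 < Real.pi * ε * Δτ ^ 2 := by
    have := (div_lt_iff₀ hden).mp hε
    nlinarith
  have hc2 : 0 < Real.cos (Real.pi * t) ^ 2 := by positivity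
  have hc1 : Real.cos (Real.pi * t) ^ 2 ≤ 1 := by
    have h := Real.neg_one_le_cos (Real.pi * t)
    have h' := Real.cos_le_one (Real.pi * t)
    nlinarith
  have : 2 < Real.pi * ε * Δτ ^ 2 / Real.cos (Real.pi * t) ^ 2 := by
    rw [lt_div_iff₀ hc2]; nlinarith
  unfold alphaT; linarith

private lemma alpha_gt_one (ε Δτ t : ℝ) (hΔτ : Δτ ≠ 0)
    (hε : ε < 0) (ht : Real.cos (Real.pi * t) ≠ 0) :
    1 < alphaT ε Δτ t := by
  have hπ := Real.pi_pos
  have hc2 : 0 < Real.cos (Real.pi * t) ^ 2 := by positivity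
  have hnum : Real.pi * ε * Δτ ^ 2 < 0 := by
    have h1 : 0 < Real.pi * Δτ ^ 2 := by positivity
    have := mul_neg_of_neg_of_pos hε h1
    nlinarith
  have : Real.pi * ε * Δτ ^ 2 / Real.cos (Real.pi * t) ^ 2 < 0 :=
    div_neg_of_neg_of_pos hnum hc2
  unfold alphaT; linarith

private lemma jacIter_shift (ε Δτ : ℝ) (t : ℕ → ℝ) (a : ℝ × ℝ) :
    ∀ j, jacIter ε Δτ t a (j + 1) =
      jacIter ε Δτ (fun n => t (n + 1)) (Japply ε Δτ (t 0) a) j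
  | 0 => rfl
  | j + 1 => by
      show Japply ε Δτ (t (j + 1)) (jacIter ε Δτ t a (j + 1)) = _
      rw [jacIter_shift ε Δτ t a j]
      rfl

/-- Under the linear instability condition, along any finite orbit segment
`t₀, …, t_k` of regular points there exists a nonzero direction `a` in the
stable cone at `t₀` whose forward Jacobian products remain in the stable
cones. -/
theorem exists_stable_direction (ε Δτ : ℝ) (hΔτ : Δτ ≠ 0)
    (hli : ε < 0 ∨ ε > 2 / (Real.pi * Δτ ^ 2))
    (k : ℕ) (t : ℕ → ℝ) (ht : ∀ j : ℕ, j ≤ k → Real.cos (Real.pi * t j) ≠ 0) :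
    ∃ a : ℝ × ℝ, a ≠ 0 ∧ a ∈ stableCone ε Δτ (t 0) ∧
      ∀ j : ℕ, 1 ≤ j → j ≤ k → jacIter ε Δτ t a j ∈ stableCone ε Δτ (t j) := by
  have hC : 0 < 2 / (Real.pi * Δτ ^ 2) := by positivity
  induction k generalizing t with
  | zero =>
    rcases hli with hε | hε
    · refine ⟨(alphaT ε Δτ (t 0) + 1, 1), ?_, ⟨one_ne_zero, ?_, ?_⟩, ?_⟩
      · intro h; simpa using congrArg Prod.snd h
      · intro h; linarith
      · intro _
        show (alphaT ε Δτ (t 0) + 1) / 1 > alphaT ε Δτ (t 0)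
        rw [div_one]; linarith
      · intro j hj hj0; omega
    · refine ⟨(alphaT ε Δτ (t 0) - 1, 1), ?_, ⟨one_ne_zero, ?_, ?_⟩, ?_⟩
      · intro h; simpa using congrArg Prod.snd h
      · intro _
        show (alphaT ε Δτ (t 0) - 1) / 1 < alphaT ε Δτ (t 0)
        rw [div_one]; linarith
      · intro h; linarith
      · intro j hj hj0; omega
  | succ k ih =>
    obtain ⟨a', ha'0, ha'mem, ha'fwd⟩ :=
      ih (fun n => t (n + 1)) (fun j hj => ht (j + 1) (by omega))
    obtain ⟨ha'2, ha'lt, ha'gt⟩ := ha'mem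
    have hx : a'.1 ≠ 0 := by
      rcases hli with hε | hε
      · have hα₁ := alpha_gt_one ε Δτ (t (0 + 1)) hΔτ hε (ht (0 + 1) (by omega))
        have hgt := ha'gt hε
        intro h; rw [h] at hgt; simp at hgt; linarith
      · have hα₁ := alpha_lt_neg_one ε Δτ (t (0 + 1)) hΔτ hε (ht (0 + 1) (by omega))
        have hlt := ha'lt hε
        intro h; rw [h] at hlt; simp at hlt; linarith
    have heq : (2 * alphaT ε Δτ (t 0) * a'.1 - a'.2) / a'.1
        = 2 * alphaT ε Δτ (t 0) - a'.2 / a'.1 := by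
      field_simp
    have hru : (a'.1 / a'.2) * (a'.2 / a'.1) = 1 := by field_simp
    have hJ : Japply ε Δτ (t 0) (2 * alphaT ε Δτ (t 0) * a'.1 - a'.2, a'.1) = a' := by
      simp only [Japply]
      exact Prod.ext_iff.mpr ⟨rfl, by ring⟩
    refine ⟨(2 * alphaT ε Δτ (t 0) * a'.1 - a'.2, a'.1), ?_, ⟨hx, ?_, ?_⟩, ?_⟩
    · intro h
      have := congrArg Prod.snd h
      simp at this
      exact hx this
    · -- case ε > 2/(πΔτ²)
      intro hε
      show (2 * alphaT ε Δτ (t 0) * a'.1 - a'.2) / a'.1 < alphaT ε Δτ (t 0)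
      have hα₁ := alpha_lt_neg_one ε Δτ (t (0 + 1)) hΔτ hε (ht (0 + 1) (by omega))
      have hα₀ := alpha_lt_neg_one ε Δτ (t 0) hΔτ hε (ht 0 (by omega))
      have hlt := ha'lt hε
      have hr0 : a'.1 / a'.2 < -1 := lt_trans hlt hα₁
      have hu1 : a'.2 / a'.1 < 0 := by nlinarith
      have hu2 : -1 < a'.2 / a'.1 := by nlinarith
      rw [heq]; linarith
    · -- case ε < 0
      intro hε
      show (2 * alphaT ε Δτ (t 0) * a'.1 - a'.2) / a'.1 > alphaT ε Δτ (t 0)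
      have hα₁ := alpha_gt_one ε Δτ (t (0 + 1)) hΔτ hε (ht (0 + 1) (by omega))
      have hα₀ := alpha_gt_one ε Δτ (t 0) hΔτ hε (ht 0 (by omega))
      have hgt := ha'gt hε
      have hr0 : 1 < a'.1 / a'.2 := lt_trans hα₁ hgt
      have hu1 : 0 < a'.2 / a'.1 := by nlinarith
      have hu2 : a'.2 / a'.1 < 1 := by nlinarith
      rw [heq]; linarith
    · intro j hj1 hjk
      cases j with
      | zero => omega
      | succ m =>
        rw [jacIter_shift, hJ]
        cases m with
        | zero => exact ⟨ha'2, ha'lt, ha'gt⟩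
        | succ m' => exact ha'fwd (m' + 1) (by omega) (by omega)
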